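/- arXiv:1312.2663 — 2 statements merged into one kernel-verified Lean document; each statement's English description precedes it below -/
import Mathlib

section
/- Let X be a real locally convex Hausdorff topological vector space and W₁, …, Wₙ convex cones in X, each with nonempty interior, that are non-conflicting: −W_j ⊄ cl(W₁ + ⋯ + Wₙ) for each j. Set W'_j = int W_j ∪ {0}. Then W'₁, …, W'ₙ are also non-conflicting: −W'_j ⊄ cl(W'₁ + ⋯ + W'ₙ) for each j. -/
/-!
The closure of a convex set with nonempty interior is the closure of its interior, so
`-W_j ⊆ closure (-(interior W_j))`. Since `interior W_i ∪ {0} ⊆ W_i`, the primed sum set lies in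
the original one; hence `-W'_j ⊆ cl(W'_1 + ⋯ + W'_n)` would force `-W_j ⊆ cl(W_1 + ⋯ + W_n)`.
-/

open Set

section Cone

variable {𝕜 E : Type*} [Semiring 𝕜] [PartialOrder 𝕜] [AddCommMonoid E] [Module 𝕜 E] {W : Set E}

theorem convex_of_smul_mem_of_add_mem (hsmul : ∀ s ∈ W, ∀ α : 𝕜, 0 ≤ α → α • s ∈ W)
    (hadd : ∀ x ∈ W, ∀ y ∈ W, x + y ∈ W) : Convex 𝕜 W :=
  fun x hx y hy a b ha hb _ ↦ hadd _ (hsmul x hx a ha) _ (hsmul y hy b hb)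

theorem zero_mem_of_smul_mem (hsmul : ∀ s ∈ W, ∀ α : 𝕜, 0 ≤ α → α • s ∈ W)
    (hW : W.Nonempty) : (0 : E) ∈ W := by
  obtain ⟨x, hx⟩ := hW
  simpa using hsmul x hx 0 le_rfl

end Cone

theorem interior_union_zero_subset {E : Type*} [Zero E] [TopologicalSpace E] {W : Set E}
    (h0 : (0 : E) ∈ W) : interior W ∪ {0} ⊆ W :=
  union_subset interior_subset (singleton_subset_iff.2 h0)

theorem Convex.subset_closure_interior {𝕜 E : Type*} [Field 𝕜] [LinearOrder 𝕜]
    [IsStrictOrderedRing 𝕜] [AddCommGroup E] [Module 𝕜 E] [TopologicalSpace E]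
    [IsTopologicalAddGroup E] [TopologicalSpace 𝕜] [OrderTopology 𝕜] [ContinuousSMul 𝕜 E]
    {s : Set E} (hs : Convex 𝕜 s) (hs' : (interior s).Nonempty) : s ⊆ closure (interior s) :=
  subset_closure.trans (hs.closure_interior_eq_closure_of_nonempty_interior hs').ge

theorem neg_subset_closure_of_neg_interior_subset {X : Type*} [TopologicalSpace X]
    [InvolutiveNeg X] [ContinuousNeg X] {s T : Set X} (hs : s ⊆ closure (interior s))
    (hT : -interior s ⊆ closure T) : -s ⊆ closure T :=
  calc -s ⊆ -closure (interior s) := neg_subset_neg.2 hs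
    _ = closure (-interior s) := neg_closure _
    _ ⊆ closure T := closure_minimal hT isClosed_closure

theorem setOf_sum_subset_setOf_sum {ι M : Type*} [Fintype ι] [AddCommMonoid M]
    {A B : ι → Set M} (h : ∀ i, A i ⊆ B i) :
    {x | ∃ y : ι → M, (∀ i, y i ∈ A i) ∧ x = ∑ i, y i} ⊆
      {x | ∃ y : ι → M, (∀ i, y i ∈ B i) ∧ x = ∑ i, y i} := by
  rintro x ⟨y, hy, rfl⟩
  exact ⟨y, fun i ↦ h i (hy i), rfl⟩

theorem stmt14_general {X : Type*} [AddCommGroup X] [Module ℝ X] [TopologicalSpace X]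
    [IsTopologicalAddGroup X] [ContinuousSMul ℝ X]
    (n : ℕ) (W : Fin n → Set X)
    (hcone : ∀ j, ∀ s ∈ W j, ∀ α : ℝ, 0 ≤ α → α • s ∈ W j)
    (hconv : ∀ j, ∀ x ∈ W j, ∀ y ∈ W j, x + y ∈ W j)
    (hint : ∀ j, (interior (W j)).Nonempty)
    (hnc : ∀ j, ¬ (-(W j) ⊆
      closure {x : X | ∃ y : Fin n → X, (∀ i, y i ∈ W i) ∧ x = ∑ i, y i})) :
    ∀ j, ¬ (-(interior (W j) ∪ {0}) ⊆
      closure {x : X | ∃ y : Fin n → X, (∀ i, y i ∈ interior (W i) ∪ {0}) ∧ x = ∑ i, y i}) := by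
  intro j h
  apply hnc j
  have hW'_sub_W : ∀ i, interior (W i) ∪ {0} ⊆ W i := fun i ↦
    interior_union_zero_subset (zero_mem_of_smul_mem (hcone i) ((hint i).mono interior_subset))
  refine neg_subset_closure_of_neg_interior_subset
    ((convex_of_smul_mem_of_add_mem (hcone j) (hconv j)).subset_closure_interior (hint j)) ?_
  calc -interior (W j) ⊆ -(interior (W j) ∪ {0}) := neg_subset_neg.2 subset_union_left
    _ ⊆ _ := h
    _ ⊆ _ := closure_mono (setOf_sum_subset_setOf_sum hW'_sub_W)

theorem stmt14 {X : Type*} [AddCommGroup X] [Module ℝ X] [TopologicalSpace X]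
    [IsTopologicalAddGroup X] [ContinuousSMul ℝ X] [LocallyConvexSpace ℝ X] [T2Space X]
    (n : ℕ) (W : Fin n → Set X)
    (hcone : ∀ j, ∀ s ∈ W j, ∀ α : ℝ, 0 ≤ α → α • s ∈ W j)
    (hconv : ∀ j, ∀ x ∈ W j, ∀ y ∈ W j, x + y ∈ W j)
    (hint : ∀ j, (interior (W j)).Nonempty)
    (hnc : ∀ j, ¬ (-(W j) ⊆
      closure {x : X | ∃ y : Fin n → X, (∀ i, y i ∈ W i) ∧ x = ∑ i, y i})) :
    ∀ j, ¬ (-(interior (W j) ∪ {0}) ⊆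
      closure {x : X | ∃ y : Fin n → X, (∀ i, y i ∈ interior (W i) ∪ {0}) ∧ x = ∑ i, y i}) :=
  stmt14_general n W hcone hconv hint hnc
end

section
/- Let (E, ξ) = ind(Eₙ, ξₙ) be a Hausdorff locally convex inductive limit of an increasing sequence of locally convex spaces with continuous inclusions. For each n, let Sₙ be a pointed convex cone in (Eₙ, ξₙ) and Wₙ a convex cone in (Eₙ, ξₙ) with Sₙ \ {0} ⊆ int_{ξₙ} Wₙ (a dilating cone of Sₙ). Assume (Wₙ)_{n∈ℕ} is non-conflicting: for each n and j ≤ n, −W_j ⊄ cl_{ξₙ}(W₁ + ⋯ + Wₙ). If A ⊆ E₁ is countably compact in (E₁, ξ₁), then there exists a₀ ∈ A such that for every n there is a convex cone W with Sₙ \ {0} ⊆ int_{ξₙ} W and (A − a₀) ∩ (−W) = {0}; i.e., ⋂_{n=1}^∞ GHeₙ(A, Sₙ) ≠ ∅. -/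
open Filter Set Topology

/-!
Non-conflict lets one separate, for each `n` and each `j ≤ n`, a point of `-W_j` from the closure
of `W₀ + ⋯ + Wₙ` in `pₙ`; the sum of these finitely many separating functionals is a continuous
linear `Fₙ` that is nonnegative on every `W_j` and hence strictly positive on every `int W_j`.
By countable compactness each `Fₙ` attains its minimum on `A` at some `bₙ`, and the sequence
`(bₙ)` has a cluster point `a₀ ∈ A`. If some `b ∈ A` had `a₀ - b ∈ int W_j`, the same would hold
for `b_k - b` with infinitely many `k ≥ j`, giving `F_k b < F_k b_k`. So `int Wₙ ∪ {0}`, which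
still contains `Sₙ \ {0}` in its interior, is a dilating cone witnessing efficiency of `a₀`.
-/

section CountablyCompact

variable {X : Type*} [TopologicalSpace X] {A : Set X}

theorem isCountablyCompact_of_forall_mapClusterPt
    (h : ∀ u : ℕ → X, (∀ k, u k ∈ A) → ∃ a ∈ A, MapClusterPt a atTop u) :
    IsCountablyCompact A := by
  refine IsCountablyCompact.of_seq_clusterPt fun u hu => ?_
  obtain ⟨N, hN⟩ := eventually_atTop.1 hu
  obtain ⟨a, ha, hcl⟩ := h (fun k => u (k + N)) fun k => hN _ (Nat.le_add_left N k)
  exact ⟨a, ha, hcl.of_comp (tendsto_add_atTop_nat N)⟩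

theorem IsCountablyCompact.exists_isMinOn (hA : IsCountablyCompact A) (hne : A.Nonempty)
    {g : X → ℝ} (hg : Continuous g) : ∃ a ∈ A, IsMinOn g A a := by
  obtain ⟨_, ⟨a, ha, rfl⟩, hleast⟩ := (hA.image hg).isCompact.exists_isLeast (hne.image g)
  exact ⟨a, ha, fun b hb => hleast (mem_image_of_mem g hb)⟩

/-- `D j b` plays the role of the points strictly improved upon by `b` at level `j`. -/
theorem IsCountablyCompact.exists_forall_notMem_of_scalarization (hA : IsCountablyCompact A)
    (hne : A.Nonempty) {g : ℕ → X → ℝ} (hg : ∀ k, Continuous (g k)) {D : ℕ → X → Set X}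
    (hD : ∀ j b, IsOpen (D j b)) (hgD : ∀ j k, j ≤ k → ∀ b, ∀ x ∈ D j b, g k b < g k x) :
    ∃ a ∈ A, ∀ j, ∀ b ∈ A, a ∉ D j b := by
  choose m hmA hmin using fun k => hA.exists_isMinOn hne (hg k)
  obtain ⟨a, haA, hcl⟩ := hA.seq_clusterPt m (Eventually.of_forall hmA)
  refine ⟨a, haA, fun j b hb ha => ?_⟩
  obtain ⟨k, hjk, hk⟩ :=
    frequently_atTop.1 (mapClusterPt_iff_frequently.1 hcl _ ((hD j b).mem_nhds ha)) j
  exact (hgD j k hjk b _ hk).not_ge (hmin k hb)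

end CountablyCompact

section Cones

variable {E : Type*} [AddCommGroup E] [Module ℝ E] [TopologicalSpace E]

theorem PointedCone.exists_strongDual_nonneg_pos [IsTopologicalAddGroup E] [ContinuousSMul ℝ E]
    [LocallyConvexSpace ℝ E] (T : PointedCone ℝ E) {ι : Type*} [Finite ι] {x : ι → E}
    (hxT : ∀ i, x i ∈ T) (hx : ∀ i, -x i ∉ closure (T : Set E)) :
    ∃ F : StrongDual ℝ E, (∀ y ∈ T, 0 ≤ F y) ∧ ∀ i, 0 < F (x i) := by
  have := Fintype.ofFinite ι
  choose f hfT hfx using fun i =>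
    ProperCone.hyperplane_separation_point (Submodule.closure T) (hx i)
  have hfT' : ∀ i, ∀ y ∈ T, 0 ≤ f i y := fun i y hy => hfT i y (subset_closure hy)
  refine ⟨∑ i, f i, fun y hy => ?_, fun i => ?_⟩
  · simpa using Finset.sum_nonneg fun k _ => hfT' k y hy
  · calc 0 < f i (x i) := by simpa using hfx i
      _ ≤ ∑ k, f k (x i) :=
        Finset.single_le_sum (fun k _ => hfT' k _ (hxT i)) (Finset.mem_univ i)
      _ = (∑ k, f k) (x i) := by simp

theorem LinearMap.pos_of_mem_interior [ContinuousSub E] [ContinuousSMul ℝ E] (f : E →ₗ[ℝ] ℝ)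
    {W : Set E} (hfW : ∀ x ∈ W, 0 ≤ f x) {w : E} (hfw : 0 < f w) {u : E}
    (hu : u ∈ interior W) : 0 < f u := by
  have hcont : Continuous fun t : ℝ => u - t • w := by fun_prop
  have hnear : ∀ᶠ t in 𝓝[>] (0 : ℝ), u - t • w ∈ W := nhdsWithin_le_nhds <|
    (hcont.tendsto' 0 u (by simp)).eventually (mem_interior_iff_mem_nhds.1 hu)
  obtain ⟨t, ht, ht0⟩ := (hnear.and self_mem_nhdsWithin).exists
  have := hfW _ ht
  rw [map_sub, map_smul, smul_eq_mul] at this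
  nlinarith [show (0 : ℝ) < t from ht0]

open Pointwise in
theorem smul_mem_interior_union_zero [ContinuousConstSMul ℝ E] {W : Set E}
    (hW : ∀ s ∈ W, ∀ α : ℝ, 0 ≤ α → α • s ∈ W) :
    ∀ s ∈ interior W ∪ {0}, ∀ α : ℝ, 0 ≤ α → α • s ∈ interior W ∪ {0} := by
  rintro s (hs | rfl) α hα
  · rcases hα.eq_or_lt with rfl | hα
    · simp
    · have : α • interior W ⊆ interior W := by
        rw [← interior_smul₀ hα.ne']
        exact interior_mono (smul_set_subset_iff.2 fun x hx => hW x hx α hα.le)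
      exact Or.inl (this (smul_mem_smul_set hs))
  · simp

end Cones

open Pointwise in
theorem add_mem_interior_union_zero {G : Type*} [AddGroup G] [TopologicalSpace G]
    [ContinuousAdd G] {W : Set G}
    (hW : ∀ x ∈ W, ∀ y ∈ W, x + y ∈ W) :
    ∀ x ∈ interior W ∪ {0}, ∀ y ∈ interior W ∪ {0}, x + y ∈ interior W ∪ {0} := by
  have hsub : interior W + W ⊆ interior W :=
    interior_maximal (add_subset_iff.2 fun x hx y hy => hW x (interior_subset hx) y hy)
      isOpen_interior.add_right
  rintro x (hx | rfl) y (hy | rfl)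
  · exact Or.inl (hsub (add_mem_add hx (interior_subset hy)))
  · rw [add_zero]; exact Or.inl hx
  · rw [zero_add]; exact Or.inl hy
  · simp

theorem image_sub_inter_neg_union_zero {α M : Type*} [AddCommGroup M] {φ : α → M} {A : Set α}
    {a₀ : α} (ha₀ : a₀ ∈ A) {U : Set M} (h : ∀ b ∈ A, φ a₀ - φ b ∉ U) :
    (fun a => φ a - φ a₀) '' A ∩ -(U ∪ {0}) = {0} := by
  ext x
  simp only [mem_inter_iff, mem_image, Set.mem_neg, mem_union, mem_singleton_iff, neg_eq_zero]
  constructor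
  · rintro ⟨⟨b, hb, rfl⟩, hU | h0⟩
    · exact absurd (by rwa [neg_sub] at hU) (h b hb)
    · exact h0
  · rintro rfl
    exact ⟨⟨a₀, ha₀, sub_self _⟩, Or.inr rfl⟩

namespace Submodule

section Semiring

variable {R E : Type*} [Semiring R] [AddCommMonoid E] [Module R E] {p : ℕ → Submodule R E}
  (hmono : Monotone p)

theorem continuous_inclusion_of_le (τ : (n : ℕ) → TopologicalSpace (p n))
    (hcont : ∀ n, Continuous[τ n, τ (n + 1)] (inclusion (hmono (Nat.le_succ n))))
    {j n : ℕ} (h : j ≤ n) : Continuous[τ j, τ n] (inclusion (hmono h)) := by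
  induction n, h using Nat.le_induction with
  | base => exact @continuous_id _ (τ j)
  | succ n _ ih => exact @Continuous.comp _ _ _ (τ j) (τ n) (τ (n + 1)) _ _ (hcont n) ih

variable [PartialOrder R] [IsOrderedRing R]

/-- `K₀ + ⋯ + Kₙ` inside `p n`, each `K i` embedded by the inclusion `p i → p n`. -/
def sumCone (K : (n : ℕ) → PointedCone R (p n)) (n : ℕ) : PointedCone R (p n) where
  carrier := {x | ∃ y : ℕ → p n, (∀ i, ∀ hi : i ≤ n, y i ∈ inclusion (hmono hi) '' K i) ∧
    x = ∑ i ∈ Finset.range (n + 1), y i}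
  zero_mem' := ⟨0, fun i hi => ⟨0, (K i).zero_mem, map_zero _⟩, by simp⟩
  add_mem' := by
    rintro _ _ ⟨y, hy, rfl⟩ ⟨z, hz, rfl⟩
    refine ⟨y + z, fun i hi => ?_, Finset.sum_add_distrib.symm⟩
    obtain ⟨a, ha, hay⟩ := hy i hi
    obtain ⟨b, hb, hbz⟩ := hz i hi
    exact ⟨a + b, (K i).add_mem ha hb, by rw [map_add, hay, hbz, Pi.add_apply]⟩
  smul_mem' := by
    rintro c _ ⟨y, hy, rfl⟩
    refine ⟨c • y, fun i hi => ?_, by rw [Finset.smul_sum]; rfl⟩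
    obtain ⟨a, ha, hay⟩ := hy i hi
    exact ⟨c • a, Submodule.smul_mem _ c ha,
      by rw [LinearMap.map_smul_of_tower, hay, Pi.smul_apply]⟩

theorem inclusion_mem_sumCone (K : (n : ℕ) → PointedCone R (p n)) {j n : ℕ} (hj : j ≤ n)
    {w : p j} (hw : w ∈ K j) : inclusion (hmono hj) w ∈ sumCone hmono K n := by
  classical
  refine ⟨Pi.single j (inclusion (hmono hj) w), fun i hi => ?_, ?_⟩
  · rcases eq_or_ne i j with rfl | hij
    · exact ⟨w, hw, by simp⟩
    · exact ⟨0, (K i).zero_mem, by simp [hij]⟩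
  · rw [Finset.sum_pi_single', if_pos (Finset.mem_range.2 (Nat.lt_succ_of_le hj))]

end Semiring

def NonConflicting {R E : Type*} [Ring R] [PartialOrder R] [IsOrderedRing R] [AddCommGroup E]
    [Module R E] {p : ℕ → Submodule R E} (hmono : Monotone p)
    (τ : (n : ℕ) → TopologicalSpace (p n)) (K : (n : ℕ) → PointedCone R (p n)) : Prop :=
  ∀ n j (hj : j ≤ n),
    ¬ (-(inclusion (hmono hj) '' K j) ⊆ @closure _ (τ n) (sumCone hmono K n))

end Submodule

theorem Submodule.NonConflicting.exists_linearMap_pos_on_interior {E : Type*} [AddCommGroup E]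
    [Module ℝ E] {p : ℕ → Submodule ℝ E} {hmono : Monotone p}
    {τ : (n : ℕ) → TopologicalSpace (p n)} {K : (n : ℕ) → PointedCone ℝ (p n)}
    (hK : NonConflicting hmono τ K) (htag : ∀ n, @IsTopologicalAddGroup (p n) (τ n) _)
    (hsmul : ∀ n, @ContinuousSMul ℝ (p n) _ _ (τ n))
    (hlc : ∀ n, @LocallyConvexSpace ℝ (p n) _ _ _ _ (τ n)) (n : ℕ) :
    ∃ F : p n →ₗ[ℝ] ℝ, Continuous[τ n, inferInstance] F ∧ ∀ j (hj : j ≤ n),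
      ∀ u ∈ @interior _ (τ j) (K j : Set (p j)), 0 < F (inclusion (hmono hj) u) := by
  have hwit : ∀ j : Iic n, ∃ w ∈ K j,
      -inclusion (hmono j.2) w ∉ @closure _ (τ n) (sumCone hmono K n : Set (p n)) := by
    intro j
    obtain ⟨_, ⟨w, hw, hwx⟩, hcl⟩ := not_subset.1 (hK n j j.2)
    exact ⟨w, hw, by rwa [hwx, neg_neg]⟩
  choose w hwK hw using hwit
  let _ := τ n; have := htag n; have := hsmul n; have := hlc n
  obtain ⟨F, hFT, hFpos⟩ := (sumCone hmono K n).exists_strongDual_nonneg_pos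
    (x := fun j => inclusion (hmono j.2) (w j))
    (fun j => inclusion_mem_sumCone hmono K j.2 (hwK j)) hw
  refine ⟨F, F.continuous, fun j hj u hu => ?_⟩
  let _ := τ j; have := htag j; have := hsmul j
  exact ((F : p n →ₗ[ℝ] ℝ) ∘ₗ inclusion (hmono hj)).pos_of_mem_interior
    (fun x hx => hFT _ (inclusion_mem_sumCone hmono K hj hx)) (hFpos ⟨j, hj⟩) hu

theorem stmt17_general {E : Type*} [AddCommGroup E] [Module ℝ E]
    (p : ℕ → Submodule ℝ E) (hmono : Monotone p)
    (τ : (n : ℕ) → TopologicalSpace (p n))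
    (htag : ∀ n, @IsTopologicalAddGroup (p n) (τ n) _)
    (hsmul : ∀ n, @ContinuousSMul ℝ (p n) _ _ (τ n))
    (hlc : ∀ n, @LocallyConvexSpace ℝ (p n) _ _ _ _ (τ n))
    (hcont : ∀ n, @Continuous _ _ (τ n) (τ (n + 1))
      (Submodule.inclusion (hmono (Nat.le_succ n))))
    (S : (n : ℕ) → Set (p n))
    (W : (n : ℕ) → Set (p n))
    (hWcone : ∀ n, ∀ s ∈ W n, ∀ α : ℝ, 0 ≤ α → α • s ∈ W n)
    (hWconv : ∀ n, ∀ x ∈ W n, ∀ y ∈ W n, x + y ∈ W n)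
    (hdil : ∀ n, S n \ {0} ⊆ @interior _ (τ n) (W n))
    (hnc : ∀ n, ∀ j, ∀ hj : j ≤ n,
      ¬ (-(Submodule.inclusion (hmono hj) '' W j) ⊆
        @closure _ (τ n) {x : p n | ∃ y : ℕ → p n,
          (∀ i, ∀ hi : i ≤ n, y i ∈ Submodule.inclusion (hmono hi) '' W i) ∧
          x = ∑ i ∈ Finset.range (n + 1), y i}))
    (A : Set (p 0)) (hAne : A.Nonempty)
    (hcc : ∀ u : ℕ → p 0, (∀ k, u k ∈ A) →
      ∃ a ∈ A, @MapClusterPt _ (τ 0) _ a Filter.atTop u) :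
    ∃ a₀ ∈ A, ∀ n, ∃ W₀ : Set (p n),
      (∀ s ∈ W₀, ∀ α : ℝ, 0 ≤ α → α • s ∈ W₀) ∧
      (∀ x ∈ W₀, ∀ y ∈ W₀, x + y ∈ W₀) ∧
      S n \ {0} ⊆ @interior _ (τ n) W₀ ∧
      ((fun a => Submodule.inclusion (hmono (Nat.zero_le n)) a
          - Submodule.inclusion (hmono (Nat.zero_le n)) a₀) '' A) ∩ (-W₀) = {0} := by
  have hWne (n : ℕ) : (W n).Nonempty :=
    image_nonempty.1 <| nonempty_neg.1 <|
      (nonempty_of_not_subset (hnc n n le_rfl)).mono sdiff_subset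
  let K n : PointedCone ℝ (p n) := .ofConeComb (W n) (hWne n) fun x hx y hy a ha b hb =>
    hWconv n _ (hWcone n x hx a ha) _ (hWcone n y hy b hb)
  choose F hFcont hFpos using (show Submodule.NonConflicting hmono τ K from hnc)
    |>.exists_linearMap_pos_on_interior htag hsmul hlc
  let _ := τ 0
  obtain ⟨a₀, ha₀, heff⟩ := (isCountablyCompact_of_forall_mapClusterPt hcc)
    |>.exists_forall_notMem_of_scalarization hAne
      (g := fun k a => F k (Submodule.inclusion (hmono k.zero_le) a))
      (D := fun j b => {a | Submodule.inclusion (hmono j.zero_le) a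
        - Submodule.inclusion (hmono j.zero_le) b ∈ @interior _ (τ j) (W j)})
      (fun k => (hFcont k).comp (Submodule.continuous_inclusion_of_le hmono τ hcont k.zero_le))
      (fun j b => by
        let _ := τ j; have := htag j
        exact isOpen_interior.preimage
          ((Submodule.continuous_inclusion_of_le hmono τ hcont j.zero_le).sub continuous_const))
      (fun j k hjk b a ha => by
        have := hFpos k j hjk _ ha
        rw [map_sub, map_sub] at this
        exact sub_pos.1 this)
  refine ⟨a₀, ha₀, fun n => ?_⟩
  let _ := τ n; have := htag n; have := hsmul n
  exact ⟨interior (W n) ∪ {0}, smul_mem_interior_union_zero (hWcone n),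
    add_mem_interior_union_zero (hWconv n),
    (hdil n).trans (interior_maximal subset_union_left isOpen_interior),
    image_sub_inter_neg_union_zero ha₀ fun b hb => heff n b hb⟩

/-- Existence of lastingly globally properly efficient points in an inductive limit
of partially ordered locally convex spaces. -/
theorem stmt17 {E : Type*} [AddCommGroup E] [Module ℝ E]
    (p : ℕ → Submodule ℝ E) (hmono : Monotone p)
    (hproper : ∀ n, p n ≠ p (n + 1))
    (τ : (n : ℕ) → TopologicalSpace (p n))
    (htag : ∀ n, @IsTopologicalAddGroup (p n) (τ n) _)
    (hsmul : ∀ n, @ContinuousSMul ℝ (p n) _ _ (τ n))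
    (hlc : ∀ n, @LocallyConvexSpace ℝ (p n) _ _ _ _ (τ n))
    (ht2 : ∀ n, @T2Space (p n) (τ n))
    (hcont : ∀ n, @Continuous _ _ (τ n) (τ (n + 1))
      (Submodule.inclusion (hmono (Nat.le_succ n))))
    (S : (n : ℕ) → Set (p n))
    (hScone : ∀ n, ∀ s ∈ S n, ∀ α : ℝ, 0 ≤ α → α • s ∈ S n)
    (hSconv : ∀ n, ∀ x ∈ S n, ∀ y ∈ S n, x + y ∈ S n)
    (hSpointed : ∀ n, S n ∩ (-(S n)) = {0})
    (W : (n : ℕ) → Set (p n))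
    (hWcone : ∀ n, ∀ s ∈ W n, ∀ α : ℝ, 0 ≤ α → α • s ∈ W n)
    (hWconv : ∀ n, ∀ x ∈ W n, ∀ y ∈ W n, x + y ∈ W n)
    (hdil : ∀ n, S n \ {0} ⊆ @interior _ (τ n) (W n))
    (hnc : ∀ n, ∀ j, ∀ hj : j ≤ n,
      ¬ (-(Submodule.inclusion (hmono hj) '' W j) ⊆
        @closure _ (τ n) {x : p n | ∃ y : ℕ → p n,
          (∀ i, ∀ hi : i ≤ n, y i ∈ Submodule.inclusion (hmono hi) '' W i) ∧
          x = ∑ i ∈ Finset.range (n + 1), y i}))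
    (A : Set (p 0)) (hAne : A.Nonempty)
    (hcc : ∀ u : ℕ → p 0, (∀ k, u k ∈ A) →
      ∃ a ∈ A, @MapClusterPt _ (τ 0) _ a Filter.atTop u) :
    ∃ a₀ ∈ A, ∀ n, ∃ W₀ : Set (p n),
      (∀ s ∈ W₀, ∀ α : ℝ, 0 ≤ α → α • s ∈ W₀) ∧
      (∀ x ∈ W₀, ∀ y ∈ W₀, x + y ∈ W₀) ∧
      S n \ {0} ⊆ @interior _ (τ n) W₀ ∧
      ((fun a => Submodule.inclusion (hmono (Nat.zero_le n)) a
          - Submodule.inclusion (hmono (Nat.zero_le n)) a₀) '' A) ∩ (-W₀) = {0} :=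
  stmt17_general p hmono τ htag hsmul hlc hcont S W hWcone hWconv hdil hnc A hAne hcc
end
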